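/- arXiv:2605.13269 — 6 statements merged into one kernel-verified Lean document; each statement's English description precedes it below -/
import Mathlib

section
/- For every x ∈ ℝ^Ω, every agent i ∈ N and every element e ∈ Ω_i, the partial derivative of the partition multilinear extension satisfies ∂f̃/∂x_e(x) = Σ_{A ∈ I^{-i}} (∏_{j ∈ N, j ≠ i} p_j(A; x)) · (F(A ∪ {e}) − F(A)), where I^{-i} = {A ∈ I : A ∩ Ω_i = ∅} is the family of feasible sets containing no element of block Ω_i. -/
/-! Fix `A` and let `i = blk e`. Only the factor `p_i(A; x)` depends on `x_e`, and it is affine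
in `x_e`: its slope is `1` if `e ∈ A`, `-1` if `A` avoids `Ω_i`, and `0` otherwise. Removing `e`
matches the feasible sets containing `e` with those avoiding `Ω_i`, and the factors of the other
blocks do not notice `e`; so the `+1` and `-1` terms pair up into the marginal gains
`F(A ∪ {e}) - F(A)`. -/

open Finset
open scoped Classical

/-- Feasibility in the partition matroid: at most one element per block. -/
def feasible {N Ω : Type*} [Fintype N] [Fintype Ω] (blk : Ω → N) (A : Finset Ω) : Prop :=
  ∀ i : N, (A.filter (fun e => blk e = i)).card ≤ 1

/-- Per-agent probability factor `p_i(A; x)`. -/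
noncomputable def blockProb {N Ω : Type*} [Fintype N] [Fintype Ω] (blk : Ω → N) (x : Ω → ℝ)
    (A : Finset Ω) (i : N) : ℝ :=
  if A.filter (fun e => blk e = i) = ∅ then
    1 - ∑ e ∈ Finset.univ.filter (fun e => blk e = i), x e
  else ∑ e ∈ A.filter (fun e => blk e = i), x e

/-- The partition multilinear extension. -/
noncomputable def pme {N Ω : Type*} [Fintype N] [Fintype Ω] (blk : Ω → N) (F : Finset Ω → ℝ)
    (x : Ω → ℝ) : ℝ :=
  ∑ A ∈ Finset.univ.filter (fun A => feasible blk A), F A * ∏ i : N, blockProb blk x A i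

/-- Partial derivative of `f` in coordinate `e` at `x`. -/
noncomputable def pderiv {Ω : Type*} (f : (Ω → ℝ) → ℝ) (e : Ω) (x : Ω → ℝ) : ℝ :=
  deriv (fun t : ℝ => f (Function.update x e t)) (x e)

theorem hasDerivAt_sum_update {𝕜 Ω : Type*} [NontriviallyNormedField 𝕜] (x : Ω → 𝕜) (e : Ω)
    (s : Finset Ω) :
    HasDerivAt (fun t => ∑ e' ∈ s, Function.update x e t e') (if e ∈ s then 1 else 0) (x e) := by
  rw [← sum_pi_single']
  exact HasDerivAt.fun_sum fun e' _ => hasDerivAt_pi.mp (hasDerivAt_update x e (x e)) e'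

theorem notMem_of_filter_blk_eq_empty {N Ω : Type*} (blk : Ω → N) {A : Finset Ω} {e : Ω}
    (hAe : A.filter (fun e' => blk e' = blk e) = ∅) : e ∉ A :=
  fun heA => eq_empty_iff_forall_notMem.mp hAe e (mem_filter.mpr ⟨heA, rfl⟩)

section

variable {N Ω : Type*} [Fintype N] [Fintype Ω] (blk : Ω → N)

theorem feasible_of_subset {A B : Finset Ω} (hAB : A ⊆ B) (hB : feasible blk B) :
    feasible blk A :=
  fun j => (card_le_card (filter_subset_filter _ hAB)).trans (hB j)

theorem feasible_insert {A : Finset Ω} {e : Ω} (hA : feasible blk A)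
    (hAe : A.filter (fun e' => blk e' = blk e) = ∅) : feasible blk (insert e A) := by
  intro j
  rw [filter_insert]
  split_ifs with hj
  · subst hj
    simp [hAe]
  · exact hA j

theorem filter_blk_eq_singleton {A : Finset Ω} {e : Ω} (hA : feasible blk A) (heA : e ∈ A) :
    A.filter (fun e' => blk e' = blk e) = {e} :=
  eq_singleton_iff_unique_mem.mpr ⟨mem_filter.mpr ⟨heA, rfl⟩,
    fun _ hb => card_le_one.mp (hA (blk e)) _ hb e (mem_filter.mpr ⟨heA, rfl⟩)⟩

theorem sum_feasible_mem_eq_sum_insert {M : Type*} [AddCommMonoid M] (e : Ω)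
    (g : Finset Ω → M) :
    ∑ A ∈ univ.filter (fun A => feasible blk A ∧ e ∈ A), g A =
      ∑ A ∈ univ.filter (fun A => feasible blk A ∧ A.filter (fun e' => blk e' = blk e) = ∅),
        g (insert e A) := by
  refine sum_nbij' (fun A => A.erase e) (insert e) ?_ ?_ ?_ ?_ ?_
  · simp only [mem_filter, mem_univ, true_and]
    rintro A ⟨hA, heA⟩
    refine ⟨feasible_of_subset blk (erase_subset e A) hA, ?_⟩
    rw [filter_erase, filter_blk_eq_singleton blk hA heA, erase_singleton]
  · simp only [mem_filter, mem_univ, true_and]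
    rintro A ⟨hA, hAe⟩
    exact ⟨feasible_insert blk hA hAe, mem_insert_self e A⟩
  · intro A hA
    exact insert_erase (mem_filter.mp hA).2.2
  · intro A hA
    exact erase_insert (notMem_of_filter_blk_eq_empty blk (mem_filter.mp hA).2.2)
  · intro A hA
    rw [insert_erase (mem_filter.mp hA).2.2]

theorem blockProb_update_of_ne (x : Ω → ℝ) (A : Finset Ω) {e : Ω} {j : N} (hj : blk e ≠ j)
    (t : ℝ) : blockProb blk (Function.update x e t) A j = blockProb blk x A j := by
  have hsum : ∀ s : Finset Ω, ∑ e' ∈ s.filter (fun e' => blk e' = j), Function.update x e t e'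
      = ∑ e' ∈ s.filter (fun e' => blk e' = j), x e' := fun s =>
    sum_congr rfl fun e' he' =>
      Function.update_of_ne (by rintro rfl; exact hj (mem_filter.mp he').2) _ _
  simp only [blockProb, hsum]

theorem blockProb_insert_of_ne (x : Ω → ℝ) (A : Finset Ω) {e : Ω} {j : N} (hj : blk e ≠ j) :
    blockProb blk x (insert e A) j = blockProb blk x A j := by
  rw [blockProb, filter_insert, if_neg hj, blockProb]

theorem prod_blockProb_update (x : Ω → ℝ) (A : Finset Ω) (e : Ω) (t : ℝ) :
    ∏ j, blockProb blk (Function.update x e t) A j =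
      blockProb blk (Function.update x e t) A (blk e) *
        ∏ j ∈ univ.erase (blk e), blockProb blk x A j := by
  rw [← mul_prod_erase univ _ (mem_univ (blk e))]
  congr 1
  exact prod_congr rfl fun j hj => blockProb_update_of_ne blk x A (ne_of_mem_erase hj).symm t

-- The two indicators are never both `1`: a set avoiding the block of `e` does not contain `e`.
theorem hasDerivAt_blockProb_update (x : Ω → ℝ) (A : Finset Ω) (e : Ω) :
    HasDerivAt (fun t => blockProb blk (Function.update x e t) A (blk e))
      ((if e ∈ A then 1 else 0) - if A.filter (fun e' => blk e' = blk e) = ∅ then 1 else 0)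
      (x e) := by
  unfold blockProb
  split_ifs with hAe heA heA
  · exact absurd heA (notMem_of_filter_blk_eq_empty blk hAe)
  · simpa using (hasDerivAt_sum_update x e (univ.filter fun e' => blk e' = blk e)).const_sub 1
  · simpa [heA] using hasDerivAt_sum_update x e (A.filter (fun e' => blk e' = blk e))
  · simpa [heA] using hasDerivAt_sum_update x e (A.filter (fun e' => blk e' = blk e))

theorem hasDerivAt_pme_update (F : Finset Ω → ℝ) (x : Ω → ℝ) (e : Ω) :
    HasDerivAt (fun t => pme blk F (Function.update x e t))
      (∑ A ∈ univ.filter (feasible blk), F A *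
        (((if e ∈ A then 1 else 0) - if A.filter (fun e' => blk e' = blk e) = ∅ then 1 else 0) *
          ∏ j ∈ univ.erase (blk e), blockProb blk x A j)) (x e) := by
  unfold pme
  refine HasDerivAt.fun_sum fun A _ => ?_
  simp only [prod_blockProb_update blk x A e]
  exact ((hasDerivAt_blockProb_update blk x A e).mul_const _).const_mul _

theorem sum_feasible_slope_eq (F : Finset Ω → ℝ) (x : Ω → ℝ) (e : Ω) :
    ∑ A ∈ univ.filter (feasible blk), F A *
        (((if e ∈ A then 1 else 0) - if A.filter (fun e' => blk e' = blk e) = ∅ then 1 else 0) *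
          ∏ j ∈ univ.erase (blk e), blockProb blk x A j) =
      ∑ A ∈ univ.filter (fun A => feasible blk A ∧ A.filter (fun e' => blk e' = blk e) = ∅),
        (∏ j ∈ univ.erase (blk e), blockProb blk x A j) * (F (insert e A) - F A) := by
  have hP : ∀ A, ∏ j ∈ univ.erase (blk e), blockProb blk x (insert e A) j =
      ∏ j ∈ univ.erase (blk e), blockProb blk x A j := fun A =>
    prod_congr rfl fun j hj => blockProb_insert_of_ne blk x A (ne_of_mem_erase hj).symm
  calc _ = ∑ A ∈ univ.filter (fun A => feasible blk A ∧ e ∈ A),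
          F A * ∏ j ∈ univ.erase (blk e), blockProb blk x A j -
        ∑ A ∈ univ.filter (fun A => feasible blk A ∧ A.filter (fun e' => blk e' = blk e) = ∅),
          F A * ∏ j ∈ univ.erase (blk e), blockProb blk x A j := by
        simp only [mul_sub, sub_mul, mul_ite, ite_mul, one_mul, zero_mul, mul_zero,
          sum_sub_distrib, ← sum_filter, filter_filter]
    _ = _ := by
        rw [sum_feasible_mem_eq_sum_insert, ← sum_sub_distrib]
        exact sum_congr rfl fun A _ => by rw [hP]; ring

end

theorem pme_gradient_general {N Ω : Type*} [Fintype N] [Fintype Ω]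
    (blk : Ω → N) (F : Finset Ω → ℝ) (x : Ω → ℝ) (i : N) (e : Ω) (he : blk e = i) :
    pderiv (pme blk F) e x =
      ∑ A ∈ Finset.univ.filter
          (fun A => feasible blk A ∧ A.filter (fun e' => blk e' = i) = ∅),
        (∏ j ∈ Finset.univ.erase i, blockProb blk x A j) * (F (insert e A) - F A) := by
  subst he
  rw [pderiv, (hasDerivAt_pme_update blk F x e).deriv, sum_feasible_slope_eq]

/-- the partial derivative of the PME in coordinate `e ∈ Ω_i` equals the
sum, over feasible sets `A` avoiding block `Ω_i`, of the product of the other blocks'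
probability factors times the marginal gain `F(A ∪ {e}) − F(A)`. -/
theorem pme_gradient {N Ω : Type*} [Fintype N] [Fintype Ω]
    (blk : Ω → N) (hblk : Function.Surjective blk)
    (F : Finset Ω → ℝ) (x : Ω → ℝ) (i : N) (e : Ω) (he : blk e = i) :
    pderiv (pme blk F) e x =
      ∑ A ∈ Finset.univ.filter
          (fun A => feasible blk A ∧ A.filter (fun e' => blk e' = i) = ∅),
        (∏ j ∈ Finset.univ.erase i, blockProb blk x A j) * (F (insert e A) - F A) :=
  pme_gradient_general blk F x i e he
end

section
/- If F is normalized, monotone, and submodular (F(A ∪ {e}) − F(A) ≥ F(B ∪ {e}) − F(B) for all A ⊆ B ⊆ Ω and e ∈ Ω \ B), then the gradient of the partition multilinear extension is antitone on the partition matroid polytope: for all x, y ∈ P = {x ∈ [0,1]^Ω : Σ_{e ∈ Ω_i} x_e ≤ 1 for all i} with x_e ≤ y_e for every e ∈ Ω, one has ∂f̃/∂x_e(x) ≥ ∂f̃/∂x_e(y) for every e ∈ Ω (DR-submodularity of the PME). -/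
open Finset
open scoped Classical

/-- Membership in the partition matroid polytope `P`. -/
def memPolytope {N Ω : Type*} [Fintype N] [Fintype Ω] (blk : Ω → N) (x : Ω → ℝ) : Prop :=
  (∀ e, 0 ≤ x e ∧ x e ≤ 1) ∧
    ∀ i : N, ∑ e ∈ Finset.univ.filter (fun e => blk e = i), x e ≤ 1

/-- Membership in the categorical face `𝓕` of the partition matroid polytope. -/
def memFace {N Ω : Type*} [Fintype N] [Fintype Ω] (blk : Ω → N) (x : Ω → ℝ) : Prop :=
  (∀ e, 0 ≤ x e ∧ x e ≤ 1) ∧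
    ∀ i : N, ∑ e ∈ Finset.univ.filter (fun e => blk e = i), x e = 1

/-- Submodularity of a set function. -/
def Submodular {Ω : Type*} [Fintype Ω] (F : Finset Ω → ℝ) : Prop :=
  ∀ A B : Finset Ω, A ⊆ B → ∀ e ∉ B, F (insert e B) - F B ≤ F (insert e A) - F A

/-!
Expanding the PME along the block of a coordinate `e` shows that it is affine in `x e`, with
slope the PME of the marginal `A ↦ F (A + e) - F A` over the remaining agents (sets meeting the
block of `e` drop out). Applying this twice, `∂f̃/∂x_e` does not depend on the other coordinates
of its own block and is affine in every other coordinate `e'`, with slope a PME of the second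
difference `F (A + e + e') - F (A + e') - F (A + e) + F A`, which is `≤ 0` by submodularity. On
the polytope all the factors `p_i(A; x)` are nonnegative, so these slopes are `≤ 0`, and raising
`x` to `y` one coordinate at a time, without leaving the polytope, can only decrease `∂f̃/∂x_e`.
-/

theorem le_of_forall_update_le {ι α β : Type*} [Fintype ι] [Preorder α] [Preorder β]
    {f : (ι → α) → β} {x y : ι → α} (hxy : x ≤ y)
    (h : ∀ z, x ≤ z → z ≤ y → ∀ i, f (Function.update z i (y i)) ≤ f z) : f y ≤ f x := by
  suffices ∀ s : Finset ι, f (s.piecewise y x) ≤ f x by simpa using this univ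
  intro s
  induction s using Finset.induction_on with
  | empty => simp
  | insert i s _ ih =>
    rw [Finset.piecewise_insert]
    exact le_trans (h _ (s.le_piecewise_of_le_of_le hxy le_rfl)
      (s.piecewise_le_of_le_of_le le_rfl hxy) i) ih

section BlockProb

variable {N Ω : Type*} [Fintype N] [Fintype Ω] {blk : Ω → N}

theorem feasible_iff_injOn {A : Finset Ω} : feasible blk A ↔ Set.InjOn blk A := by
  simp only [feasible, Finset.card_le_one, Finset.mem_filter, Set.InjOn, Finset.mem_coe]
  exact ⟨fun h a ha b hb hab => h (blk b) a ⟨ha, hab⟩ b ⟨hb, rfl⟩,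
    fun h i a ha b hb => h ha.1 hb.1 (ha.2.trans hb.2.symm)⟩

theorem blockProb_congr_of_ne {x x' : Ω → ℝ} {A A' : Finset Ω} {e : Ω} {i : N} (hi : i ≠ blk e)
    (hx : ∀ a, a ≠ e → x' a = x a) (hA : ∀ a, a ≠ e → (a ∈ A' ↔ a ∈ A)) :
    blockProb blk x' A' i = blockProb blk x A i := by
  have hne : ∀ a, blk a = i → a ≠ e := by rintro a rfl rfl; exact hi rfl
  have hfilter : A'.filter (blk · = i) = A.filter (blk · = i) := by
    ext a
    simp only [Finset.mem_filter]
    exact ⟨fun h => ⟨(hA a (hne a h.2)).1 h.1, h.2⟩, fun h => ⟨(hA a (hne a h.2)).2 h.1, h.2⟩⟩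
  have hsum (s : Finset Ω) (hs : ∀ a ∈ s, blk a = i) : ∑ a ∈ s, x' a = ∑ a ∈ s, x a :=
    Finset.sum_congr rfl fun a ha => hx a (hne a (hs a ha))
  unfold blockProb
  rw [hfilter, hsum _ (fun a ha => (Finset.mem_filter.1 ha).2),
    hsum _ (fun a ha => (Finset.mem_filter.1 ha).2)]

theorem blockProb_update_self {x : Ω → ℝ} {A : Finset Ω} (hA : Set.InjOn blk A) (e : Ω) (t : ℝ) :
    blockProb blk (Function.update x e t) A (blk e) = blockProb blk x A (blk e) +
      (t - x e) * ((if e ∈ A then 1 else 0) - if ∀ a ∈ A, blk a ≠ blk e then 1 else 0) := by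
  have hmem : e ∈ univ.filter (blk · = blk e) := by simp
  unfold blockProb
  by_cases heA : e ∈ A
  · have hfilter : A.filter (blk · = blk e) = {e} := by
      refine Finset.eq_singleton_iff_unique_mem.2 ⟨by simp [heA], fun a ha => ?_⟩
      rw [Finset.mem_filter] at ha
      exact hA ha.1 heA ha.2
    have hmeets : ¬ ∀ a ∈ A, blk a ≠ blk e := fun h => h e heA rfl
    simp only [hfilter, Finset.singleton_ne_empty, if_false, Finset.sum_singleton, heA, if_true,
      hmeets, Function.update_self]
    ring
  · have hsum (s : Finset Ω) (hs : e ∉ s) : ∑ a ∈ s, Function.update x e t a = ∑ a ∈ s, x a :=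
      Finset.sum_congr rfl fun a ha => Function.update_of_ne (ne_of_mem_of_not_mem ha hs) _ _
    simp only [Finset.filter_eq_empty_iff, heA, if_false]
    split_ifs
    · rw [Finset.sum_update_of_mem hmem, ← Finset.add_sum_erase _ _ hmem,
        Finset.sdiff_singleton_eq_erase]
      ring
    · rw [hsum _ (fun h => heA (Finset.mem_filter.1 h).1)]
      ring

theorem memPolytope_of_le {x y : Ω → ℝ} (hy : memPolytope blk y) (hx : 0 ≤ x) (hxy : x ≤ y) :
    memPolytope blk x :=
  ⟨fun e => ⟨hx e, (hxy e).trans (hy.1 e).2⟩,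
    fun i => (Finset.sum_le_sum fun e _ => hxy e).trans (hy.2 i)⟩

theorem blockProb_nonneg {x : Ω → ℝ} (hx : memPolytope blk x) (A : Finset Ω) (i : N) :
    0 ≤ blockProb blk x A i := by
  unfold blockProb
  split_ifs
  · linarith [hx.2 i]
  · exact Finset.sum_nonneg fun e _ => (hx.1 e).1

end BlockProb

section FeasibleAvoiding

variable {N Ω : Type*} [Fintype Ω] {blk : Ω → N}

noncomputable def feasibleAvoiding (blk : Ω → N) (T : Finset N) : Finset (Finset Ω) :=
  univ.filter fun A => Set.InjOn blk A ∧ ∀ a ∈ A, blk a ∉ T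

theorem mem_feasibleAvoiding {T : Finset N} {A : Finset Ω} :
    A ∈ feasibleAvoiding blk T ↔ Set.InjOn blk A ∧ ∀ a ∈ A, blk a ∉ T := by
  simp [feasibleAvoiding]

theorem filter_feasibleAvoiding_forall_ne (T : Finset N) (e : Ω) :
    (feasibleAvoiding blk T).filter (fun A => ∀ a ∈ A, blk a ≠ blk e) =
      feasibleAvoiding blk (insert (blk e) T) := by
  ext A
  simp only [Finset.mem_filter, mem_feasibleAvoiding, Finset.mem_insert, not_or]
  grind

theorem filter_feasibleAvoiding_mem {T : Finset N} {e : Ω} (he : blk e ∉ T) :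
    (feasibleAvoiding blk T).filter (e ∈ ·) =
      (feasibleAvoiding blk (insert (blk e) T)).image (insert e) := by
  ext A
  simp only [Finset.mem_filter, Finset.mem_image, mem_feasibleAvoiding, Finset.mem_insert, not_or]
  constructor
  · rintro ⟨⟨hinj, hT⟩, heA⟩
    refine ⟨A.erase e, ⟨hinj.mono (by simp), fun a ha => ?_⟩, Finset.insert_erase heA⟩
    obtain ⟨hae, haA⟩ := Finset.mem_erase.1 ha
    exact ⟨fun h => hae (hinj haA heA h), hT a haA⟩
  · rintro ⟨B, ⟨hinj, hB⟩, rfl⟩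
    refine ⟨⟨?_, ?_⟩, Finset.mem_insert_self e B⟩
    · rw [Finset.coe_insert, Set.injOn_insert (fun h => (hB e h).1 rfl)]
      exact ⟨hinj, fun ⟨a, ha, hae⟩ => (hB a ha).1 hae⟩
    · simpa [he] using fun a ha => (hB a ha).2

noncomputable def marginal (G : Finset Ω → ℝ) (e : Ω) (A : Finset Ω) : ℝ := G (insert e A) - G A

theorem sum_feasibleAvoiding_mul_slope {T : Finset N} {e : Ω} (he : blk e ∉ T)
    (G Q : Finset Ω → ℝ)
    (hQ : ∀ B ∈ feasibleAvoiding blk (insert (blk e) T), Q (insert e B) = Q B) :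
    ∑ A ∈ feasibleAvoiding blk T,
        G A * ((if e ∈ A then 1 else 0) - if ∀ a ∈ A, blk a ≠ blk e then 1 else 0) * Q A =
      ∑ B ∈ feasibleAvoiding blk (insert (blk e) T), marginal G e B * Q B := by
  have hinj : Set.InjOn (insert e) (feasibleAvoiding blk (insert (blk e) T) : Set (Finset Ω)) :=
    fun B hB B' hB' h => by
      rw [Finset.mem_coe, mem_feasibleAvoiding] at hB hB'
      rw [← Finset.erase_insert (fun h => (hB.2 e h) (Finset.mem_insert_self _ _)), h,
        Finset.erase_insert (fun h => (hB'.2 e h) (Finset.mem_insert_self _ _))]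
  simp only [mul_sub, sub_mul, mul_ite, mul_one, mul_zero, ite_mul, zero_mul,
    Finset.sum_sub_distrib, ← Finset.sum_filter, filter_feasibleAvoiding_mem he,
    filter_feasibleAvoiding_forall_ne, Finset.sum_image hinj, marginal]
  congr 1
  exact Finset.sum_congr rfl fun B hB => by rw [hQ B hB]

theorem Submodular.marginal_marginal_nonpos {F : Finset Ω → ℝ} (hF : Submodular F) {e e' : Ω}
    {A : Finset Ω} (he : e ∉ insert e' A) : marginal (marginal F e) e' A ≤ 0 := by
  have := hF A (insert e' A) (Finset.subset_insert e' A) e he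
  simp only [marginal]
  linarith

end FeasibleAvoiding

section RestrictedPme

variable {N Ω : Type*} [Fintype N] [Fintype Ω] {blk : Ω → N}

/-- The PME of `G` over the agents outside `T`: sets meeting a block of `T` are dropped. -/
noncomputable def restrictedPme (blk : Ω → N) (T : Finset N) (G : Finset Ω → ℝ) (x : Ω → ℝ) : ℝ :=
  ∑ A ∈ feasibleAvoiding blk T, G A * ∏ i ∈ univ \ T, blockProb blk x A i

theorem pme_eq_restrictedPme (F : Finset Ω → ℝ) : pme blk F = restrictedPme blk ∅ F := by
  ext x
  simp [pme, restrictedPme, feasibleAvoiding, feasible_iff_injOn]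

theorem restrictedPme_update {T : Finset N} {e : Ω} (he : blk e ∉ T) (G : Finset Ω → ℝ)
    (x : Ω → ℝ) (t : ℝ) :
    restrictedPme blk T G (Function.update x e t) =
      restrictedPme blk T G x +
        (t - x e) * restrictedPme blk (insert (blk e) T) (marginal G e) x := by
  have hsplit (z : Ω → ℝ) (A : Finset Ω) : ∏ i ∈ univ \ T, blockProb blk z A i =
      blockProb blk z A (blk e) * ∏ i ∈ univ \ insert (blk e) T, blockProb blk z A i := by
    rw [Finset.sdiff_insert, Finset.mul_prod_erase _ _ (by simp [he])]
  have hne {i : N} (hi : i ∈ univ \ insert (blk e) T) : i ≠ blk e := by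
    rintro rfl; simp at hi
  have hupdate (A : Finset Ω) :
      ∏ i ∈ univ \ insert (blk e) T, blockProb blk (Function.update x e t) A i =
        ∏ i ∈ univ \ insert (blk e) T, blockProb blk x A i :=
    Finset.prod_congr rfl fun i hi =>
      blockProb_congr_of_ne (hne hi) (fun a ha => Function.update_of_ne ha _ _) fun _ _ => Iff.rfl
  have hinsert (B : Finset Ω) : ∏ i ∈ univ \ insert (blk e) T, blockProb blk x (insert e B) i =
      ∏ i ∈ univ \ insert (blk e) T, blockProb blk x B i :=
    Finset.prod_congr rfl fun i hi =>
      blockProb_congr_of_ne (hne hi) (fun _ _ => rfl) fun a ha => by simp [ha]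
  unfold restrictedPme
  rw [← sum_feasibleAvoiding_mul_slope he G _ fun B _ => hinsert B, Finset.mul_sum,
    ← Finset.sum_add_distrib]
  refine Finset.sum_congr rfl fun A hA => ?_
  rw [hsplit, hsplit, hupdate, blockProb_update_self (mem_feasibleAvoiding.1 hA).1]
  ring

theorem restrictedPme_update_of_mem {T : Finset N} {e : Ω} (he : blk e ∈ T) (G : Finset Ω → ℝ)
    (x : Ω → ℝ) (t : ℝ) :
    restrictedPme blk T G (Function.update x e t) = restrictedPme blk T G x := by
  refine Finset.sum_congr rfl fun A _ => congrArg _ <| Finset.prod_congr rfl fun i hi => ?_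
  exact blockProb_congr_of_ne (by rintro rfl; simp [he] at hi)
    (fun a ha => Function.update_of_ne ha _ _) fun _ _ => Iff.rfl

theorem pderiv_restrictedPme {T : Finset N} {e : Ω} (he : blk e ∉ T) (G : Finset Ω → ℝ)
    (x : Ω → ℝ) :
    pderiv (restrictedPme blk T G) e x = restrictedPme blk (insert (blk e) T) (marginal G e) x := by
  unfold pderiv
  simp_rw [restrictedPme_update he]
  simp

theorem restrictedPme_nonpos {T : Finset N} {G : Finset Ω → ℝ} {x : Ω → ℝ}
    (hG : ∀ A ∈ feasibleAvoiding blk T, G A ≤ 0) (hx : memPolytope blk x) :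
    restrictedPme blk T G x ≤ 0 :=
  Finset.sum_nonpos fun A hA =>
    mul_nonpos_of_nonpos_of_nonneg (hG A hA) (Finset.prod_nonneg fun i _ => blockProb_nonneg hx A i)

theorem restrictedPme_marginal_update_le {F : Finset Ω → ℝ} (hF : Submodular F) {z : Ω → ℝ}
    (hz : memPolytope blk z) (e e' : Ω) {t : ℝ} (ht : z e' ≤ t) :
    restrictedPme blk {blk e} (marginal F e) (Function.update z e' t) ≤
      restrictedPme blk {blk e} (marginal F e) z := by
  by_cases hblk : blk e' ∈ ({blk e} : Finset N)
  · rw [restrictedPme_update_of_mem hblk]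
  rw [restrictedPme_update hblk]
  have hslope : restrictedPme blk (insert (blk e') {blk e}) (marginal (marginal F e) e') z ≤ 0 := by
    refine restrictedPme_nonpos (fun A hA => hF.marginal_marginal_nonpos ?_) hz
    have hA := (mem_feasibleAvoiding.1 hA).2
    rw [Finset.mem_insert]
    rintro (rfl | heA)
    · exact hblk (Finset.mem_singleton_self _)
    · exact hA e heA (by simp)
  exact add_le_of_nonpos_right (mul_nonpos_of_nonneg_of_nonpos (sub_nonneg.2 ht) hslope)

end RestrictedPme

theorem pme_gradient_antitone_general {N Ω : Type*} [Fintype N] [Fintype Ω]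
    (blk : Ω → N)
    (F : Finset Ω → ℝ)
    (hsub : Submodular F) :
    ∀ x y : Ω → ℝ, memPolytope blk x → memPolytope blk y → (∀ e : Ω, x e ≤ y e) →
      ∀ e : Ω, pderiv (pme blk F) e y ≤ pderiv (pme blk F) e x := by
  intro x y hx hy hxy e
  have hderiv (z : Ω → ℝ) :
      pderiv (pme blk F) e z = restrictedPme blk {blk e} (marginal F e) z := by
    rw [pme_eq_restrictedPme, pderiv_restrictedPme (Finset.notMem_empty _)]
    rfl
  rw [hderiv, hderiv]
  refine le_of_forall_update_le hxy fun z hxz hzy e' => ?_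
  have hz : memPolytope blk z := memPolytope_of_le hy (fun a => (hx.1 a).1.trans (hxz a)) hzy
  exact restrictedPme_marginal_update_le hsub hz e e' (hzy e')

/-- if `F` is normalized, monotone, and submodular, the gradient of the
partition multilinear extension is antitone on the partition matroid polytope
(DR-submodularity of the PME). -/
theorem pme_gradient_antitone {N Ω : Type*} [Fintype N] [Fintype Ω]
    (blk : Ω → N) (hblk : Function.Surjective blk)
    (F : Finset Ω → ℝ)
    (hnorm : F ∅ = 0)
    (hmono : ∀ A B : Finset Ω, A ⊆ B → F A ≤ F B)
    (hsub : Submodular F) :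
    ∀ x y : Ω → ℝ, memPolytope blk x → memPolytope blk y → (∀ e : Ω, x e ≤ y e) →
      ∀ e : Ω, pderiv (pme blk F) e y ≤ pderiv (pme blk F) e x :=
  pme_gradient_antitone_general blk F hsub
end

section
/- Let F : 2^Ω → ℝ be normalized, monotone, and submodular. For each i ∈ N let e_i, u_i ∈ Ω_i, set A = {e_i : i ∈ N} and Y = {u_i : i ∈ N}, and write A^{-i} = A \ {e_i}. Then F(Y) − 2·F(A) ≤ Σ_{i ∈ N} [ (F(A^{-i} ∪ {u_i}) − F(A^{-i})) − (F(A^{-i} ∪ {e_i}) − F(A^{-i})) ]. -/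
open Finset
open scoped Classical

/-!
Write `A⁻ⁱ = A \ {e_i}`. Since the `e_i` are distinct, removing them one at a time telescopes, and
submodularity bounds each removal loss `F A - F A⁻ⁱ` by the loss at the corresponding stage, so
`∑ᵢ (F A - F A⁻ⁱ) ≤ F A`. On the other side, monotonicity and submodularity give
`F Y ≤ F (A ∪ Y) ≤ F A + ∑ᵢ (F (A ∪ {uᵢ}) - F A) ≤ F A + ∑ᵢ (F (A⁻ⁱ ∪ {uᵢ}) - F A⁻ⁱ)`.
Subtracting the first estimate from the second is the claim, because `A⁻ⁱ ∪ {eᵢ} = A`.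
-/

namespace Submodular

variable {Ω : Type*} [Fintype Ω] {F : Finset Ω → ℝ}

theorem insert_sub_le_of_subset (hF : Submodular F) (hmono : Monotone F) {A B : Finset Ω}
    (hAB : A ⊆ B) (e : Ω) : F (insert e B) - F B ≤ F (insert e A) - F A := by
  by_cases heB : e ∈ B
  · have : F A ≤ F (insert e A) := hmono (subset_insert e A)
    rw [insert_eq_of_mem heB]
    linarith
  · exact hF A B hAB e heB

theorem sum_sub_erase_le (hF : Submodular F) (h0 : F ∅ = 0) (A : Finset Ω) :
    ∑ a ∈ A, (F A - F (A.erase a)) ≤ F A := by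
  induction A using Finset.induction_on with
  | empty => simp [h0]
  | @insert x S hx ih =>
    have hloss : ∀ a ∈ S, F (insert x S) - F ((insert x S).erase a) ≤ F S - F (S.erase a) := by
      intro a ha
      have hax : a ≠ x := ne_of_mem_of_not_mem ha hx
      have hsub := hF (S.erase a) (insert x (S.erase a)) (subset_insert _ _) a (by simp [hax])
      rwa [insert_comm, insert_erase ha, ← erase_insert_of_ne hax.symm] at hsub
    calc ∑ a ∈ insert x S, (F (insert x S) - F ((insert x S).erase a))
        = F (insert x S) - F S + ∑ a ∈ S, (F (insert x S) - F ((insert x S).erase a)) := by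
          rw [sum_insert hx, erase_insert hx]
      _ ≤ F (insert x S) - F S + ∑ a ∈ S, (F S - F (S.erase a)) :=
          add_le_add_right (sum_le_sum hloss) _
      _ ≤ F (insert x S) := by linarith

theorem union_image_sub_le (hF : Submodular F) (hmono : Monotone F) {ι : Type*}
    (A : Finset Ω) (s : Finset ι) (u : ι → Ω) :
    F (A ∪ s.image u) - F A ≤ ∑ i ∈ s, (F (insert (u i) A) - F A) := by
  induction s using Finset.induction_on with
  | empty => simp
  | @insert i s hi ih =>
    have hgain := hF.insert_sub_le_of_subset hmono (subset_union_left : A ⊆ A ∪ s.image u) (u i)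
    rw [image_insert, union_insert, sum_insert hi]
    linarith

end Submodular

theorem deterministic_face_gap_general {N Ω : Type*} [Fintype N] [Fintype Ω]
    (blk : Ω → N)
    (F : Finset Ω → ℝ)
    (hnorm : F ∅ = 0)
    (hmono : ∀ A B : Finset Ω, A ⊆ B → F A ≤ F B)
    (hsub : Submodular F)
    (e u : N → Ω) (he : ∀ i, blk (e i) = i) :
    F (Finset.image u Finset.univ) - 2 * F (Finset.image e Finset.univ) ≤
      ∑ i : N,
        ((F (insert (u i) ((Finset.image e Finset.univ).erase (e i))) -
            F ((Finset.image e Finset.univ).erase (e i))) -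
          (F (insert (e i) ((Finset.image e Finset.univ).erase (e i))) -
            F ((Finset.image e Finset.univ).erase (e i)))) := by
  set A := Finset.image e Finset.univ
  have hF : Monotone F := fun A B h => hmono A B h
  have he_inj : Function.Injective e := fun i j h => by rw [← he i, ← he j, h]
  have hloss : ∑ i : N, (F A - F (A.erase (e i))) ≤ F A := by
    simpa [A, sum_image fun i _ j _ h => he_inj h] using hsub.sum_sub_erase_le hnorm A
  have hunion : F (image u univ) ≤ F (A ∪ image u univ) := hF subset_union_right
  have hgain := hsub.union_image_sub_le hF A univ u
  have hlocal : ∑ i : N, (F (insert (u i) A) - F A) ≤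
      ∑ i : N, (F (insert (u i) (A.erase (e i))) - F (A.erase (e i))) :=
    sum_le_sum fun i _ => hsub.insert_sub_le_of_subset hF (erase_subset _ _) (u i)
  have hA : ∀ i, insert (e i) (A.erase (e i)) = A := fun i =>
    insert_erase (mem_image_of_mem e (mem_univ i))
  simp only [hA, sum_sub_distrib] at hloss hgain hlocal ⊢
  linarith

/-- for a normalized, monotone, submodular `F` and one-element-per-block
selections `A = {e_i}` and `Y = {u_i}`, one has
`F(Y) − 2F(A) ≤ Σ_i [(F(A^{-i} ∪ {u_i}) − F(A^{-i})) − (F(A^{-i} ∪ {e_i}) − F(A^{-i}))]`. -/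
theorem deterministic_face_gap {N Ω : Type*} [Fintype N] [Fintype Ω]
    (blk : Ω → N) (hblk : Function.Surjective blk)
    (F : Finset Ω → ℝ)
    (hnorm : F ∅ = 0)
    (hmono : ∀ A B : Finset Ω, A ⊆ B → F A ≤ F B)
    (hsub : Submodular F)
    (e u : N → Ω) (he : ∀ i, blk (e i) = i) (hu : ∀ i, blk (u i) = i) :
    F (Finset.image u Finset.univ) - 2 * F (Finset.image e Finset.univ) ≤
      ∑ i : N,
        ((F (insert (u i) ((Finset.image e Finset.univ).erase (e i))) -
            F ((Finset.image e Finset.univ).erase (e i))) -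
          (F (insert (e i) ((Finset.image e Finset.univ).erase (e i))) -
            F ((Finset.image e Finset.univ).erase (e i)))) :=
  deterministic_face_gap_general blk F hnorm hmono hsub e u he
end

section
/- Let F : 2^Ω → ℝ be monotone and submodular. For each i ∈ N let e_i, u_i ∈ Ω_i, set A = {e_i : i ∈ N} and Y = {u_i : i ∈ N}, and write A^{-i} = A \ {e_i}. Then F(Y) − F(A) ≤ Σ_{i ∈ N} [ F(A^{-i} ∪ {u_i}) − F(A^{-i}) ]. -/
open Finset
open scoped Classical

/-!
For monotone submodular `F` the marginal gain of `x` over a set only shrinks as the set grows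
(monotonicity covers the case `x ∈ B` that submodularity leaves out). Hence
`F(Y) - F(A) ≤ F(A ∪ Y) - F(A)` telescopes to at most `Σ_i [F(A + u_i) - F(A)]`, and each term is
at most `F(A^{-i} + u_i) - F(A^{-i})` since `A^{-i} ⊆ A`.
-/

namespace Submodular

variable {Ω : Type*} [Fintype Ω] {F : Finset Ω → ℝ}

theorem marginal_anti (hF : Submodular F) (hmono : Monotone F) {A B : Finset Ω} (hAB : A ⊆ B)
    (x : Ω) : F (insert x B) - F B ≤ F (insert x A) - F A := by
  by_cases hx : x ∈ B
  · rw [insert_eq_self.mpr hx, sub_self, sub_nonneg]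
    exact hmono (subset_insert x A)
  · exact hF A B hAB x hx

theorem sub_le_sum_marginal {ι : Type*} (hF : Submodular F) (hmono : Monotone F)
    (A : Finset Ω) (u : ι → Ω) (s : Finset ι) :
    F (A ∪ s.image u) - F A ≤ ∑ i ∈ s, (F (insert (u i) A) - F A) := by
  induction s using Finset.induction with
  | empty => simp
  | insert j s hj ih =>
    rw [image_insert, sum_insert hj, union_insert]
    have hgain := hF.marginal_anti hmono (subset_union_left : A ⊆ A ∪ s.image u) (u j)
    linarith

end Submodular

theorem add_comparator_bound_general {N Ω : Type*} [Fintype N] [Fintype Ω]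
    (F : Finset Ω → ℝ)
    (hmono : ∀ A B : Finset Ω, A ⊆ B → F A ≤ F B)
    (hsub : Submodular F)
    (e u : N → Ω) :
    F (Finset.image u Finset.univ) - F (Finset.image e Finset.univ) ≤
      ∑ i : N,
        (F (insert (u i) ((Finset.image e Finset.univ).erase (e i))) -
          F ((Finset.image e Finset.univ).erase (e i))) := by
  set A := Finset.image e Finset.univ
  have hF_mono : Monotone F := fun S T => hmono S T
  calc F (univ.image u) - F A
      ≤ F (A ∪ univ.image u) - F A := by gcongr; exact hF_mono subset_union_right
    _ ≤ ∑ i, (F (insert (u i) A) - F A) := hsub.sub_le_sum_marginal hF_mono A u univ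
    _ ≤ _ := sum_le_sum fun i _ => hsub.marginal_anti hF_mono (erase_subset (e i) A) (u i)

/-- for a monotone submodular `F` and one-element-per-block selections
`A = {e_i}` and `Y = {u_i}`, one has
`F(Y) − F(A) ≤ Σ_i [F(A^{-i} ∪ {u_i}) − F(A^{-i})]`. -/
theorem add_comparator_bound {N Ω : Type*} [Fintype N] [Fintype Ω]
    (blk : Ω → N) (hblk : Function.Surjective blk)
    (F : Finset Ω → ℝ)
    (hmono : ∀ A B : Finset Ω, A ⊆ B → F A ≤ F B)
    (hsub : Submodular F)
    (e u : N → Ω) (he : ∀ i, blk (e i) = i) (hu : ∀ i, blk (u i) = i) :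
    F (Finset.image u Finset.univ) - F (Finset.image e Finset.univ) ≤
      ∑ i : N,
        (F (insert (u i) ((Finset.image e Finset.univ).erase (e i))) -
          F ((Finset.image e Finset.univ).erase (e i))) :=
  add_comparator_bound_general F hmono hsub e u
end

section
/- Let N be a finite index set, and for each i ∈ N let 𝒜_i be a nonempty finite action set. For each i and a ∈ 𝒜_i, let π^i_a : ℝ^d → ℝ be differentiable with π^i_a(θ) > 0 and Σ_{a ∈ 𝒜_i} π^i_a(θ) = 1 for all θ. Let F assign a real value F(σ) to each joint action σ ∈ ∏_i 𝒜_i, and for each i let F^{-i}(σ) denote a real value depending only on the restriction of σ to N \ {i}; likewise let b_i(σ) be any real value depending only on the restriction of σ to N \ {i}. Define J(θ) = Σ_σ (∏_{i ∈ N} π^i_{σ(i)}(θ))·F(σ). Then the gradient satisfies the score-function identity ∇J(θ) = Σ_σ (∏_{i ∈ N} π^i_{σ(i)}(θ)) · Σ_{i ∈ N} ∇log π^i_{σ(i)}(θ) · ( F(σ) − F^{-i}(σ) − b_i(σ) + F^{-i}(σ) ), i.e., ∇J(θ) = Σ_σ (∏_i π^i_{σ(i)}(θ)) · Σ_i ∇log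 π^i_{σ(i)}(θ) · ( (F(σ) − F^{-i}(σ)) − b_i(σ) ) + Σ_σ (∏_i π^i_{σ(i)}(θ)) · Σ_i ∇log π^i_{σ(i)}(θ) · F^{-i}(σ), where the second sum vanishes; in particular ∇J(θ) = Σ_σ (∏_i π^i_{σ(i)}(θ)) · Σ_i ∇log π^i_{σ(i)}(θ) · ( (F(σ) − F^{-i}(σ)) − b_i(σ) ). -/
/-!
By the product rule, `∇J = Σ_σ π(σ) Σ_i ∇log π^i_{σ(i)} · F(σ)` with `π(σ) = ∏_i π^i_{σ(i)}`.
If `G` does not depend on `σ(i)`, then `Σ_σ π(σ) ∇log π^i_{σ(i)} · G(σ)` vanishes: summing over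
`σ(i)` first leaves `Σ_a ∇π^i_a = ∇1 = 0`. So `F^{-i}` and `b_i` may be subtracted for free.
-/

open Finset

theorem Fintype.sum_smul_eq_zero_of_forall_eq {R M α : Type*} [Semiring R] [AddCommMonoid M]
    [Module R M] [Fintype α] {c : α → R} {v : α → M} (hc : ∀ a a', c a = c a')
    (hv : ∑ a, v a = 0) : ∑ a, c a • v a = 0 := by
  rcases isEmpty_or_nonempty α with hα | ⟨⟨a₀⟩⟩
  · exact Fintype.sum_empty _
  · rw [Fintype.sum_congr _ _ fun a => by rw [hc a a₀], ← Finset.smul_sum, hv, smul_zero]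

theorem Fintype.sum_smul_apply_eq_zero_of_dependsOn {R M ι : Type*} [Semiring R]
    [AddCommMonoid M] [Module R M] [Fintype ι] [DecidableEq ι] {α : ι → Type*}
    [∀ i, Fintype (α i)] {i : ι} {w : (∀ j, α j) → R} (hw : DependsOn w {i}ᶜ) {v : α i → M}
    (hv : ∑ a, v a = 0) : ∑ σ, w σ • v (σ i) = 0 := by
  let e := Equiv.piSplitAt i α
  rw [← e.symm.sum_comp, Fintype.sum_prod_type_right]
  refine Finset.sum_eq_zero fun τ _ => ?_
  simp only [e, Equiv.piSplitAt_symm_apply, dite_true]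
  refine Fintype.sum_smul_eq_zero_of_forall_eq (fun a a' => hw fun j hj => ?_) hv
  simp [Equiv.piSplitAt_symm_apply, show j ≠ i from hj]

theorem fderiv_sum_eq_zero_of_sum_eq_const {𝕜 E F ι : Type*} [NontriviallyNormedField 𝕜]
    [NormedAddCommGroup E] [NormedSpace 𝕜 E] [NormedAddCommGroup F] [NormedSpace 𝕜 F]
    [Fintype ι] {f : ι → E → F} {x : E} {c : F} (hf : ∀ a, DifferentiableAt 𝕜 (f a) x)
    (hsum : ∀ y, ∑ a, f a y = c) : ∑ a, fderiv 𝕜 (f a) x = 0 := by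
  rw [← fderiv_fun_sum fun a _ => hf a, funext hsum, fderiv_const_apply]

section ProductPolicy

variable {N E : Type*} [Fintype N] [DecidableEq N] [NormedAddCommGroup E] [NormedSpace ℝ E]
  {𝒜 : N → Type*} [∀ i, Fintype (𝒜 i)] (p : ∀ i, 𝒜 i → E → ℝ) (θ : E)

/-- `Σ_σ π(σ) Σ_i ∇log π^i_{σ(i)}(θ) · c_i(σ)` for the product policy `π(σ) = ∏_i π^i_{σ(i)}`,
with `∇log g` written as `g⁻¹ • ∇g`. -/
noncomputable def scoreSum (c : N → (∀ i, 𝒜 i) → ℝ) : E →L[ℝ] ℝ :=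
  ∑ σ : ∀ i, 𝒜 i, (∏ i, p i (σ i) θ) •
    ∑ i, ((p i (σ i) θ)⁻¹ * c i σ) • fderiv ℝ (p i (σ i)) θ

theorem scoreSum_sub (c c' : N → (∀ i, 𝒜 i) → ℝ) :
    scoreSum p θ (c - c') = scoreSum p θ c - scoreSum p θ c' := by
  simp only [scoreSum, Pi.sub_apply, mul_sub, sub_smul, sum_sub_distrib, smul_sub]

variable {p θ}

theorem scoreSum_eq_sum_prod_erase (hp : ∀ i a, p i a θ ≠ 0) (c : N → (∀ i, 𝒜 i) → ℝ) :
    scoreSum p θ c = ∑ σ : ∀ i, 𝒜 i, ∑ i,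
      (c i σ * ∏ j ∈ univ.erase i, p j (σ j) θ) • fderiv ℝ (p i (σ i)) θ := by
  refine Fintype.sum_congr _ _ fun σ => ?_
  rw [smul_sum]
  refine Fintype.sum_congr _ _ fun i => ?_
  rw [smul_smul, ← mul_prod_erase univ (fun j => p j (σ j) θ) (mem_univ i)]
  field_simp [hp i (σ i)]

theorem hasFDerivAt_sum_prod_mul (hp : ∀ i a, p i a θ ≠ 0)
    (hdiff : ∀ i a, DifferentiableAt ℝ (p i a) θ) (F : (∀ i, 𝒜 i) → ℝ) :
    HasFDerivAt (fun θ => ∑ σ : ∀ i, 𝒜 i, (∏ i, p i (σ i) θ) * F σ)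
      (scoreSum p θ fun _ => F) θ := by
  refine (HasFDerivAt.fun_sum fun σ _ =>
    (HasFDerivAt.finsetProd fun i _ => (hdiff i (σ i)).hasFDerivAt).mul_const (F σ)).congr_fderiv ?_
  simp only [scoreSum_eq_sum_prod_erase hp, smul_sum, smul_smul]

theorem scoreSum_eq_zero_of_dependsOn (hp : ∀ i a, p i a θ ≠ 0)
    (hdiff : ∀ i a, DifferentiableAt ℝ (p i a) θ) (hsum : ∀ i x, ∑ a, p i a x = 1)
    {c : N → (∀ i, 𝒜 i) → ℝ} (hc : ∀ i, DependsOn (c i) {i}ᶜ) : scoreSum p θ c = 0 := by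
  rw [scoreSum_eq_sum_prod_erase hp, sum_comm]
  refine sum_eq_zero fun i _ => Fintype.sum_smul_apply_eq_zero_of_dependsOn ?_
    (fderiv_sum_eq_zero_of_sum_eq_const (hdiff i) (hsum i))
  intro σ σ' h
  dsimp only
  rw [hc i h, prod_congr rfl fun j hj => by rw [h j (ne_of_mem_erase hj)]]

end ProductPolicy

theorem score_function_policy_gradient_general
    {N : Type*} [Fintype N] [DecidableEq N] {d : ℕ}
    (𝒜 : N → Type*) [∀ i, Fintype (𝒜 i)]
    (p : ∀ i : N, 𝒜 i → (Fin d → ℝ) → ℝ)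
    (hdiff : ∀ i a, Differentiable ℝ (p i a))
    (hpos : ∀ i a θ, 0 < p i a θ)
    (hsum : ∀ i θ, ∑ a : 𝒜 i, p i a θ = 1)
    (F : (∀ i, 𝒜 i) → ℝ)
    (Fm : N → (∀ i, 𝒜 i) → ℝ)
    (hFm : ∀ i (σ σ' : ∀ j, 𝒜 j), (∀ j, j ≠ i → σ j = σ' j) → Fm i σ = Fm i σ')
    (b : N → (∀ i, 𝒜 i) → ℝ)
    (hb : ∀ i (σ σ' : ∀ j, 𝒜 j), (∀ j, j ≠ i → σ j = σ' j) → b i σ = b i σ')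
    (J : (Fin d → ℝ) → ℝ)
    (hJ : J = fun θ => ∑ σ : ∀ i, 𝒜 i, (∏ i, p i (σ i) θ) * F σ)
    (θ : Fin d → ℝ) :
    (∑ σ : ∀ i, 𝒜 i, (∏ i, p i (σ i) θ) •
        (∑ i, ((p i (σ i) θ)⁻¹ * Fm i σ) • fderiv ℝ (p i (σ i)) θ) = 0) ∧
    fderiv ℝ J θ =
      ∑ σ : ∀ i, 𝒜 i, (∏ i, p i (σ i) θ) •
        (∑ i, ((p i (σ i) θ)⁻¹ * ((F σ - Fm i σ) - b i σ)) •
          fderiv ℝ (p i (σ i)) θ) := by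
  have hp : ∀ i a, p i a θ ≠ 0 := fun i a => (hpos i a θ).ne'
  have hdiffθ : ∀ i a, DifferentiableAt ℝ (p i a) θ := fun i a => (hdiff i a).differentiableAt
  have hFm0 : scoreSum p θ Fm = 0 :=
    scoreSum_eq_zero_of_dependsOn hp hdiffθ hsum fun i _ _ h => hFm i _ _ h
  have hb0 : scoreSum p θ b = 0 :=
    scoreSum_eq_zero_of_dependsOn hp hdiffθ hsum fun i _ _ h => hb i _ _ h
  refine ⟨hFm0, ?_⟩
  calc fderiv ℝ J θ
      = scoreSum p θ fun _ => F := hJ ▸ (hasFDerivAt_sum_prod_mul hp hdiffθ F).fderiv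
    _ = scoreSum p θ ((fun _ => F) - Fm - b) := by
      rw [scoreSum_sub, scoreSum_sub, hFm0, hb0, sub_zero, sub_zero]

/-- score-function policy-gradient identity for a product of categorical
policies.  With `J(θ) = Σ_σ (∏_i π^i_{σ(i)}(θ))·F(σ)`, for any `F^{-i}` and baselines
`b_i` depending only on the restriction of `σ` to `N \ {i}`, the sum
`Σ_σ (∏_i π) Σ_i ∇log π^i_{σ(i)}·F^{-i}(σ)` vanishes and
`∇J(θ) = Σ_σ (∏_i π) Σ_i ∇log π^i_{σ(i)}·((F(σ) − F^{-i}(σ)) − b_i(σ))`. -/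
theorem score_function_policy_gradient
    {N : Type*} [Fintype N] [DecidableEq N] {d : ℕ}
    (𝒜 : N → Type*) [∀ i, Fintype (𝒜 i)] [∀ i, Nonempty (𝒜 i)]
    (p : ∀ i : N, 𝒜 i → (Fin d → ℝ) → ℝ)
    (hdiff : ∀ i a, Differentiable ℝ (p i a))
    (hpos : ∀ i a θ, 0 < p i a θ)
    (hsum : ∀ i θ, ∑ a : 𝒜 i, p i a θ = 1)
    (F : (∀ i, 𝒜 i) → ℝ)
    (Fm : N → (∀ i, 𝒜 i) → ℝ)
    (hFm : ∀ i (σ σ' : ∀ j, 𝒜 j), (∀ j, j ≠ i → σ j = σ' j) → Fm i σ = Fm i σ')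
    (b : N → (∀ i, 𝒜 i) → ℝ)
    (hb : ∀ i (σ σ' : ∀ j, 𝒜 j), (∀ j, j ≠ i → σ j = σ' j) → b i σ = b i σ')
    (J : (Fin d → ℝ) → ℝ)
    (hJ : J = fun θ => ∑ σ : ∀ i, 𝒜 i, (∏ i, p i (σ i) θ) * F σ)
    (θ : Fin d → ℝ) :
    (∑ σ : ∀ i, 𝒜 i, (∏ i, p i (σ i) θ) •
        (∑ i, ((p i (σ i) θ)⁻¹ * Fm i σ) • fderiv ℝ (p i (σ i)) θ) = 0) ∧
    fderiv ℝ J θ =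
      ∑ σ : ∀ i, 𝒜 i, (∏ i, p i (σ i) θ) •
        (∑ i, ((p i (σ i) θ)⁻¹ * ((F σ - Fm i σ) - b i σ)) •
          fderiv ℝ (p i (σ i)) θ) :=
  score_function_policy_gradient_general 𝒜 p hdiff hpos hsum F Fm hFm b hb J hJ θ
end

section
/- Let C be a nonempty closed convex subset of Euclidean space ℝ^d with diameter at most D (‖u − v‖₂ ≤ D for all u, v ∈ C), let f : ℝ^d → ℝ be differentiable with ‖∇f(x)‖₂ ≤ G for all x ∈ C, and suppose f satisfies the restricted DR first-order gap inequality on C: (1/2)f(y) − f(x) ≤ (1/2)⟨∇f(x), y − x⟩ for all x, y ∈ C. Let x* ∈ C, let K ≥ 1, set η = D/(G·√K) (with G > 0), and let x_0 ∈ C and, for 0 ≤ k < K, let x_{k+1} ∈ C be the Euclidean projection of x_k + η·∇f(x_k) onto C, i.e., ⟨x_k + η·∇f(x_k) − x_{k+1}, y − x_{k+1}⟩ ≤ 0 for all y ∈ C. Then the average iterate value satisfies (1/K)·Σ_{k=0}^{K−1} f(x_k) ≥ (1/2)·f(x*) − D·G/(2·√K). -/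
/-!
Projection onto `C` does not increase the distance to points of `C`, so each projected gradient
step gives the online-gradient bound
`2η⟨∇f(xₖ), x* - xₖ⟩ ≤ ‖xₖ - x*‖² - ‖xₖ₊₁ - x*‖² + η²G²`.
Telescoping and the choice `η = D/(G√K)` bound `∑ₖ ⟨∇f(xₖ), x* - xₖ⟩` by `DG√K`, and summing the
gap inequality with `y = x*` over the iterates turns this into the claim.
-/

open Finset

section ProjectedGradient

variable {E : Type*} [NormedAddCommGroup E] [InnerProductSpace ℝ E]

lemma norm_sub_sq_le_of_inner_sub_sub_nonpos {z p y : E} (h : inner ℝ (z - p) (y - p) ≤ 0) :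
    ‖p - y‖ ^ 2 ≤ ‖z - y‖ ^ 2 := by
  have hexpand := norm_add_sq_real (z - p) (p - y)
  rw [sub_add_sub_cancel] at hexpand
  have hcross : 0 ≤ inner ℝ (z - p) (p - y) := by
    rw [← neg_sub y p, inner_neg_right]
    linarith
  nlinarith [sq_nonneg ‖z - p‖]

lemma two_mul_inner_le_of_projected_step {x g p y : E} {η : ℝ}
    (hstep : inner ℝ (x + η • g - p) (y - p) ≤ 0) :
    2 * η * inner ℝ g (y - x) ≤ ‖x - y‖ ^ 2 - ‖p - y‖ ^ 2 + η ^ 2 * ‖g‖ ^ 2 := by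
  have hproj := norm_sub_sq_le_of_inner_sub_sub_nonpos hstep
  have hexpand : ‖x + η • g - y‖ ^ 2 =
      ‖x - y‖ ^ 2 - 2 * η * inner ℝ g (y - x) + η ^ 2 * ‖g‖ ^ 2 := by
    rw [add_sub_right_comm, norm_add_sq_real, real_inner_smul_right, real_inner_comm,
      ← neg_sub y x, inner_neg_right, norm_smul, Real.norm_eq_abs, mul_pow, sq_abs]
    ring
  linarith

lemma two_mul_sum_inner_le_of_projected_steps {x g : ℕ → E} {y : E} {K : ℕ} {η G : ℝ}
    (hg : ∀ k < K, ‖g k‖ ≤ G)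
    (hstep : ∀ k < K, inner ℝ (x k + η • g k - x (k + 1)) (y - x (k + 1)) ≤ 0) :
    2 * η * ∑ k ∈ range K, inner ℝ (g k) (y - x k) ≤ ‖x 0 - y‖ ^ 2 + K * (η ^ 2 * G ^ 2) := by
  calc 2 * η * ∑ k ∈ range K, inner ℝ (g k) (y - x k)
      ≤ ∑ k ∈ range K, (‖x k - y‖ ^ 2 - ‖x (k + 1) - y‖ ^ 2 + η ^ 2 * G ^ 2) := by
        rw [mul_sum]
        refine sum_le_sum fun k hk => ?_
        have hk := mem_range.1 hk
        have hg2 : ‖g k‖ ^ 2 ≤ G ^ 2 := pow_le_pow_left₀ (norm_nonneg _) (hg k hk) 2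
        nlinarith [two_mul_inner_le_of_projected_step (hstep k hk), sq_nonneg η]
    _ = ‖x 0 - y‖ ^ 2 - ‖x K - y‖ ^ 2 + K * (η ^ 2 * G ^ 2) := by
        rw [sum_add_distrib, sum_range_sub' (fun k => ‖x k - y‖ ^ 2), sum_const, card_range,
          nsmul_eq_mul]
    _ ≤ ‖x 0 - y‖ ^ 2 + K * (η ^ 2 * G ^ 2) := by linarith [sq_nonneg ‖x K - y‖]

lemma sum_inner_le_of_projected_steps {x g : ℕ → E} {y : E} {K : ℕ} {η D G : ℝ}
    (hK : 0 < K) (hG : 0 < G) (hη : η = D / (G * Real.sqrt K))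
    (hdist : ∀ k < K, ‖x k - y‖ ≤ D) (hg : ∀ k < K, ‖g k‖ ≤ G)
    (hstep : ∀ k < K, inner ℝ (x k + η • g k - x (k + 1)) (y - x (k + 1)) ≤ 0) :
    ∑ k ∈ range K, inner ℝ (g k) (y - x k) ≤ D * G * Real.sqrt K := by
  have hsK : 0 < Real.sqrt K := Real.sqrt_pos.2 (Nat.cast_pos.2 hK)
  rcases (norm_nonneg _).trans (hdist 0 hK) |>.eq_or_lt with rfl | hD
  · -- here `η = 0`, so the telescoped bound is useless; instead every iterate equals `y`
    refine (sum_nonpos fun k hk => ?_).trans_eq (by ring)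
    rw [← neg_sub, norm_le_zero_iff.1 (hdist k (mem_range.1 hk)), inner_neg_right,
      inner_zero_right, neg_zero]
  · have hη0 : 0 < η := hη ▸ by positivity
    have hbound := two_mul_sum_inner_le_of_projected_steps hg hstep
    have hx0 : ‖x 0 - y‖ ^ 2 ≤ D ^ 2 := pow_le_pow_left₀ (norm_nonneg _) (hdist 0 hK) 2
    have hηD : η * (G * Real.sqrt K) = D := by rw [hη, div_mul_cancel₀ _ (by positivity)]
    have hKη : (K : ℝ) * (η ^ 2 * G ^ 2) = D ^ 2 := by
      rw [← hηD, mul_pow, mul_pow, Real.sq_sqrt (Nat.cast_nonneg K)]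
      ring
    refine le_of_mul_le_mul_left ?_ hη0
    nlinarith

end ProjectedGradient

theorem projected_gradient_half_approximation_general {d : ℕ}
    (C : Set (EuclideanSpace ℝ (Fin d)))
    (D G : ℝ) (hG : 0 < G)
    (hdiam : ∀ u ∈ C, ∀ v ∈ C, ‖u - v‖ ≤ D)
    (f : EuclideanSpace ℝ (Fin d) → ℝ)
    (hgrad : ∀ x ∈ C, ‖gradient f x‖ ≤ G)
    (hDR : ∀ x ∈ C, ∀ y ∈ C,
      (1 / 2) * f y - f x ≤ (1 / 2) * (inner ℝ (gradient f x) (y - x) : ℝ))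
    (xstar : EuclideanSpace ℝ (Fin d)) (hxstar : xstar ∈ C)
    (K : ℕ) (hK : 1 ≤ K)
    (η : ℝ) (hη : η = D / (G * Real.sqrt K))
    (x : ℕ → EuclideanSpace ℝ (Fin d)) (hx0 : x 0 ∈ C)
    (hproj : ∀ k < K, x (k + 1) ∈ C ∧
      ∀ y ∈ C, (inner ℝ (x k + η • gradient f (x k) - x (k + 1)) (y - x (k + 1)) : ℝ) ≤ 0) :
    (1 / 2) * f xstar - D * G / (2 * Real.sqrt K) ≤
      (1 / K) * ∑ k ∈ Finset.range K, f (x k) := by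
  have hxC : ∀ k ≤ K, x k ∈ C := by
    rintro (_ | k) hk
    · exact hx0
    · exact (hproj k hk).1
  have hregret : ∑ k ∈ range K, inner ℝ (gradient f (x k)) (xstar - x k) ≤
      D * G * Real.sqrt K :=
    sum_inner_le_of_projected_steps hK hG hη (fun k hk => hdiam _ (hxC k hk.le) _ hxstar)
      (fun k hk => hgrad _ (hxC k hk.le)) (fun k hk => (hproj k hk).2 xstar hxstar)
  have hgap : ∑ k ∈ range K, ((1 / 2) * f xstar - f (x k)) ≤
      ∑ k ∈ range K, (1 / 2) * inner ℝ (gradient f (x k)) (xstar - x k) :=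
    sum_le_sum fun k hk => hDR _ (hxC k (mem_range.1 hk).le) _ hxstar
  rw [sum_sub_distrib, sum_const, card_range, nsmul_eq_mul, ← mul_sum] at hgap
  have hK0 : (0 : ℝ) < K := Nat.cast_pos.2 hK
  have hscale : D * G / (2 * Real.sqrt K) * K = D * G * Real.sqrt K / 2 := by
    field_simp
    rw [Real.sq_sqrt hK0.le]
  rw [one_div_mul_eq_div (K : ℝ), le_div_iff₀ hK0]
  linarith

/-- stagewise approximation guarantee for projected gradient ascent on a
function satisfying the restricted DR first-order gap inequality: with step size
`η = D/(G√K)`, the average iterate value is at least `(1/2)·f(x*) − D·G/(2√K)`. -/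
theorem projected_gradient_half_approximation {d : ℕ}
    (C : Set (EuclideanSpace ℝ (Fin d)))
    (hne : C.Nonempty) (hclosed : IsClosed C) (hconv : Convex ℝ C)
    (D G : ℝ) (hG : 0 < G)
    (hdiam : ∀ u ∈ C, ∀ v ∈ C, ‖u - v‖ ≤ D)
    (f : EuclideanSpace ℝ (Fin d) → ℝ) (hf : Differentiable ℝ f)
    (hgrad : ∀ x ∈ C, ‖gradient f x‖ ≤ G)
    (hDR : ∀ x ∈ C, ∀ y ∈ C,
      (1 / 2) * f y - f x ≤ (1 / 2) * (inner ℝ (gradient f x) (y - x) : ℝ))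
    (xstar : EuclideanSpace ℝ (Fin d)) (hxstar : xstar ∈ C)
    (K : ℕ) (hK : 1 ≤ K)
    (η : ℝ) (hη : η = D / (G * Real.sqrt K))
    (x : ℕ → EuclideanSpace ℝ (Fin d)) (hx0 : x 0 ∈ C)
    (hproj : ∀ k < K, x (k + 1) ∈ C ∧
      ∀ y ∈ C, (inner ℝ (x k + η • gradient f (x k) - x (k + 1)) (y - x (k + 1)) : ℝ) ≤ 0) :
    (1 / 2) * f xstar - D * G / (2 * Real.sqrt K) ≤
      (1 / K) * ∑ k ∈ Finset.range K, f (x k) :=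
  projected_gradient_half_approximation_general C D G hG hdiam f hgrad hDR xstar hxstar K hK η hη x
    hx0 hproj
end
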